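/- arXiv:math/0410100 — 2 statements merged into one kernel-verified Lean document; each statement's English description precedes it below -/
import Mathlib

section
/- Let (M,ω) be a non-compact symplectic manifold with H¹(M,ℝ)=0 and with exact symplectic form ω, and fix a 1-form ω₁ on M with dω₁=ω and a point x₀∈M. Then the function C_{x₀} on Diff(M,ω)×Diff(M,ω) defined by C_{x₀}(g₁,g₂)=∫_{x₀}^{g₂x₀}(g₁*ω₁−ω₁) (the integral taken along any smooth curve from x₀ to g₂x₀, well-defined since g₁*ω₁−ω₁ is exact) is a normalized 2-cocycle on the group Diff(M,ω) with values in the trivial Diff(M,ω)-module ℝ. -/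
open scoped BigOperators

namespace SymplCocycle

variable {M V : Type*} [AddCommGroup V] [Module ℝ V]

abbrev Form (M V : Type*) [AddCommGroup V] [Module ℝ V] (k : ℕ) :=
  M → V [⋀^Fin k]→ₗ[ℝ] ℝ

noncomputable def ofFun (f : M → ℝ) : Form M V 0 :=
  fun x => AlternatingMap.constOfIsEmpty ℝ V (Fin 0) (f x)

noncomputable def wedgeAlt {p q : ℕ} (α : V [⋀^Fin p]→ₗ[ℝ] ℝ) (β : V [⋀^Fin q]→ₗ[ℝ] ℝ) :
    V [⋀^Fin (p + q)]→ₗ[ℝ] ℝ :=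
  AlternatingMap.domDomCongr finSumFinEquiv
    ((LinearMap.mul' ℝ ℝ).compAlternatingMap (α.domCoprod β))

noncomputable def wedge {p q : ℕ} (α : Form M V p) (β : Form M V q) : Form M V (p + q) :=
  fun x => wedgeAlt (α x) (β x)

noncomputable def wpow (ω : Form M V 2) : (n : ℕ) → Form M V (2 * n)
  | 0 => ofFun fun _ => (1 : ℝ)
  | n + 1 => wedge (wpow ω n) ω

def castF {k l : ℕ} (h : k = l) (α : Form M V k) : Form M V l := h ▸ α

noncomputable def iprod (ω : Form M V 2) (X : M → V) : Form M V 1 :=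
  fun x => (ω x).curryLeft (X x)

/-- An abstract "differential calculus" on `M`, with all tangent spaces identified with `V`:
it records which functions/maps/forms/vector fields are smooth, the tangent maps of smooth
self-maps, the exterior derivative, and the Lie bracket of vector fields, together with their
standard properties.  The axiom `apply_eq_of_d_ofFun_eq_zero` encodes connectedness of `M`. -/
structure DiffCalc (M V : Type*) [AddCommGroup V] [Module ℝ V] where
  SmoothFun : (M → ℝ) → Prop
  SmoothMap : (M → M) → Prop
  SmoothForm : ∀ {k : ℕ}, Form M V k → Prop
  SmoothVF : (M → V) → Prop
  Tmap : (M → M) → M → V →ₗ[ℝ] V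
  d : ∀ {k : ℕ}, Form M V k → Form M V (k + 1)
  lieVF : (M → V) → (M → V) → (M → V)
  smoothMap_id : SmoothMap id
  smoothMap_comp : ∀ {f g : M → M}, SmoothMap f → SmoothMap g → SmoothMap (f ∘ g)
  smoothFun_comp : ∀ {f : M → ℝ} {g : M → M}, SmoothFun f → SmoothMap g → SmoothFun (f ∘ g)
  smoothFun_const : ∀ c : ℝ, SmoothFun fun _ => c
  smoothForm_ofFun : ∀ {f : M → ℝ}, SmoothFun f → SmoothForm (ofFun f)
  smoothFun_of_ofFun : ∀ {f : M → ℝ}, SmoothForm (ofFun f) → SmoothFun f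
  smoothForm_add : ∀ {k} {α β : Form M V k}, SmoothForm α → SmoothForm β → SmoothForm (α + β)
  smoothForm_neg : ∀ {k} {α : Form M V k}, SmoothForm α → SmoothForm (-α)
  smoothForm_wedge : ∀ {p q} {α : Form M V p} {β : Form M V q},
    SmoothForm α → SmoothForm β → SmoothForm (wedge α β)
  smoothForm_d : ∀ {k} {α : Form M V k}, SmoothForm α → SmoothForm (d α)
  smoothForm_pull : ∀ {k} {α : Form M V k} {g : M → M}, SmoothMap g → SmoothForm α →
    SmoothForm fun x => (α (g x)).compLinearMap (Tmap g x)
  smoothVF_lie : ∀ {X Y : M → V}, SmoothVF X → SmoothVF Y → SmoothVF (lieVF X Y)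
  lieVF_antisymm : ∀ X Y : M → V, lieVF X Y = -lieVF Y X
  Tmap_id : ∀ x : M, Tmap id x = LinearMap.id
  Tmap_comp : ∀ {f g : M → M} (x : M), SmoothMap f → SmoothMap g →
    Tmap (f ∘ g) x = (Tmap f (g x)).comp (Tmap g x)
  d_add : ∀ {k} (α β : Form M V k), d (α + β) = d α + d β
  d_d : ∀ {k} (α : Form M V k), SmoothForm α → d (d α) = 0
  d_pull : ∀ {k} {g : M → M} (α : Form M V k), SmoothMap g → SmoothForm α →
    d (fun x => (α (g x)).compLinearMap (Tmap g x)) =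
      fun x => (d α (g x)).compLinearMap (Tmap g x)
  apply_eq_of_d_ofFun_eq_zero : ∀ {f : M → ℝ}, SmoothFun f → d (ofFun f) = 0 →
    ∀ x y : M, f x = f y

/-- Pullback of a `k`-form along a (smooth) map. -/
def DiffCalc.pull (F : DiffCalc M V) {k : ℕ} (g : M → M) (α : Form M V k) : Form M V k :=
  fun x => (α (g x)).compLinearMap (F.Tmap g x)

/-- The symplectomorphisms (diffeomorphisms preserving the `2`-form `ω`) of `M`. -/
def DiffCalc.IsSymplecto (F : DiffCalc M V) (ω : Form M V 2) (g : Equiv.Perm M) : Prop :=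
  F.SmoothMap g ∧ F.SmoothMap g.symm ∧ F.pull g ω = ω

/-- Pointwise nondegeneracy of a `2`-form. -/
def Nondegenerate (ω : Form M V 2) : Prop :=
  ∀ x : M, ∀ u : V, u ≠ 0 → ∃ v : V, ω x ![u, v] ≠ 0

/-- A `2`-form is symplectic if it is smooth, closed and nondegenerate. -/
def DiffCalc.IsSymplectic (F : DiffCalc M V) (ω : Form M V 2) : Prop :=
  F.SmoothForm ω ∧ F.d ω = 0 ∧ Nondegenerate ω

/-- `X` is a locally Hamiltonian vector field: `i_X ω` is closed. -/
def DiffCalc.IsLocHam (F : DiffCalc M V) (ω : Form M V 2) (X : M → V) : Prop :=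
  F.SmoothVF X ∧ F.SmoothForm (iprod ω X) ∧ F.d (iprod ω X) = 0

/-- `X` is a Hamiltonian vector field: `i_X ω` is exact. -/
def DiffCalc.IsHam (F : DiffCalc M V) (ω : Form M V 2) (X : M → V) : Prop :=
  F.SmoothVF X ∧ F.SmoothForm (iprod ω X) ∧
    ∃ f : M → ℝ, F.SmoothFun f ∧ F.d (ofFun f) = iprod ω X

/-- `H¹(M,ℝ) = 0`: every closed smooth `1`-form is the differential of a smooth function. -/
def DiffCalc.H1Trivial (F : DiffCalc M V) : Prop :=
  ∀ α : Form M V 1, F.SmoothForm α → F.d α = 0 →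
    ∃ f : M → ℝ, F.SmoothFun f ∧ F.d (ofFun f) = α

section Aux

variable {M V : Type*} [AddCommGroup V] [Module ℝ V]

lemma ofFun_sub (f g : M → ℝ) : (ofFun (f - g) : Form M V 0) = ofFun f - ofFun g := by
  funext x; ext v; simp [ofFun]

lemma ofFun_add (f g : M → ℝ) : (ofFun (f + g) : Form M V 0) = ofFun f + ofFun g := by
  funext x; ext v; simp [ofFun]

lemma d_zero (F : DiffCalc M V) {k : ℕ} : F.d (0 : Form M V k) = 0 := by
  have h := F.d_add (0 : Form M V k) 0
  simpa using h.symm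

lemma d_neg (F : DiffCalc M V) {k : ℕ} (α : Form M V k) : F.d (-α) = -F.d α := by
  have h := F.d_add α (-α)
  simp only [add_neg_cancel, d_zero F] at h
  linear_combination (norm := abel) -h

lemma d_sub (F : DiffCalc M V) {k : ℕ} (α β : Form M V k) :
    F.d (α - β) = F.d α - F.d β := by
  rw [sub_eq_add_neg, F.d_add, d_neg, sub_eq_add_neg]

lemma pull_sub (F : DiffCalc M V) {k : ℕ} (g : M → M) (α β : Form M V k) :
    F.pull g (α - β) = F.pull g α - F.pull g β := by
  funext x; ext v; simp [DiffCalc.pull]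

lemma pull_comp (F : DiffCalc M V) {k : ℕ} {f g : M → M} (hf : F.SmoothMap f)
    (hg : F.SmoothMap g) (α : Form M V k) :
    F.pull (f ∘ g) α = F.pull g (F.pull f α) := by
  funext x; ext v
  simp [DiffCalc.pull, F.Tmap_comp x hf hg]

lemma pull_ofFun (F : DiffCalc M V) (g : M → M) (f : M → ℝ) :
    F.pull g (ofFun f) = ofFun (f ∘ g) := by
  funext x; ext v; simp [DiffCalc.pull, ofFun]

/-- Two primitives of the same form have the same increments. -/
lemma primitive_increment_eq (F : DiffCalc M V) {f g : M → ℝ}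
    (hf : F.SmoothFun f) (hg : F.SmoothFun g)
    (h : F.d (ofFun f) = F.d (ofFun g)) (x y : M) :
    f y - f x = g y - g x := by
  have hs : F.SmoothFun (f - g) := by
    apply F.smoothFun_of_ofFun
    rw [ofFun_sub, sub_eq_add_neg]
    exact F.smoothForm_add (F.smoothForm_ofFun hf) (F.smoothForm_neg (F.smoothForm_ofFun hg))
  have hd : F.d (ofFun (f - g)) = 0 := by
    rw [ofFun_sub, d_sub F, h, sub_self]
  have := F.apply_eq_of_d_ofFun_eq_zero hs hd y x
  simp only [Pi.sub_apply] at this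
  linarith

end Aux

/-- Let `(M, ω)` be a non-compact (connected) symplectic manifold with
`H¹(M,ℝ) = 0` and with exact symplectic form `ω`; fix a `1`-form `ω₁` with `dω₁ = ω` and a
base point `x₀ ∈ M`.  Then the function `C_{x₀}` on `Diff(M,ω) × Diff(M,ω)` defined by
`C_{x₀}(g₁, g₂) = ∫_{x₀}^{g₂ x₀} (g₁*ω₁ − ω₁)` is a normalized `2`-cocycle on the group
`Diff(M,ω)` of symplectomorphisms, with values in the trivial module `ℝ`.

Since `H¹(M,ℝ) = 0`, the closed `1`-form `g₁*ω₁ − ω₁` is exact, and the line integral from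
`x₀` to `g₂ x₀` equals `f (g₂ x₀) − f x₀` for any primitive `f` of `g₁*ω₁ − ω₁` (this is
independent of the choice of the primitive because `M` is connected); the hypothesis `hC`
states exactly that `C` is given by these line integrals. -/
theorem cocycle_of_lineIntegral
    {M V : Type*} [AddCommGroup V] [Module ℝ V]
    [TopologicalSpace M] [NoncompactSpace M]
    (F : DiffCalc M V)
    (ω : Form M V 2) (hω : F.SmoothForm ω) (hnd : Nondegenerate ω)
    (ω₁ : Form M V 1) (hω₁ : F.SmoothForm ω₁) (hdω₁ : F.d ω₁ = ω)
    (hH1 : F.H1Trivial)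
    (x₀ : M)
    (C : Equiv.Perm M → Equiv.Perm M → ℝ)
    (hC : ∀ g₁ ∈ {g | F.IsSymplecto ω g}, ∀ g₂ ∈ {g | F.IsSymplecto ω g},
      ∃ f : M → ℝ, F.SmoothFun f ∧ F.d (ofFun f) = F.pull g₁ ω₁ - ω₁ ∧
        C g₁ g₂ = f (g₂ x₀) - f x₀) :
    (∀ g₁ ∈ {g | F.IsSymplecto ω g}, ∀ g₂ ∈ {g | F.IsSymplecto ω g},
        ∀ g₃ ∈ {g | F.IsSymplecto ω g},
        C g₂ g₃ - C (g₁ * g₂) g₃ + C g₁ (g₂ * g₃) - C g₁ g₂ = 0) ∧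
      (∀ g ∈ {g | F.IsSymplecto ω g}, C 1 g = 0 ∧ C g 1 = 0) := by
  classical
  -- the set of symplectomorphisms is closed under multiplication and contains 1
  have hone : F.IsSymplecto ω 1 := by
    refine ⟨by simpa using F.smoothMap_id, by exact F.smoothMap_id, ?_⟩
    funext x; ext v
    simp [DiffCalc.pull, F.Tmap_id]
  have hmul : ∀ g₁ g₂ : Equiv.Perm M, F.IsSymplecto ω g₁ → F.IsSymplecto ω g₂ →
      F.IsSymplecto ω (g₁ * g₂) := by
    intro g₁ g₂ h₁ h₂
    refine ⟨?_, ?_, ?_⟩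
    · simpa [Equiv.Perm.coe_mul] using F.smoothMap_comp h₁.1 h₂.1
    · have hco : ⇑(g₁ * g₂).symm = ⇑g₂.symm ∘ ⇑g₁.symm := rfl
      rw [hco]; exact F.smoothMap_comp h₂.2.1 h₁.2.1
    · have : ⇑(g₁ * g₂) = ⇑g₁ ∘ ⇑g₂ := Equiv.Perm.coe_mul g₁ g₂
      rw [this, pull_comp F h₁.1 h₂.1, h₁.2.2, h₂.2.2]
  -- key: relation between a primitive for `g₁ * g₂` and primitives for `g₁`, `g₂`
  have key : ∀ g₁ g₂ : Equiv.Perm M, F.IsSymplecto ω g₁ → F.IsSymplecto ω g₂ →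
      ∀ f₁ f₂ f₁₂ : M → ℝ, F.SmoothFun f₁ → F.SmoothFun f₂ → F.SmoothFun f₁₂ →
      F.d (ofFun f₁) = F.pull g₁ ω₁ - ω₁ →
      F.d (ofFun f₂) = F.pull g₂ ω₁ - ω₁ →
      F.d (ofFun f₁₂) = F.pull (g₁ * g₂) ω₁ - ω₁ →
      ∀ x y : M, f₁₂ y - f₁₂ x = (f₁ (g₂ y) + f₂ y) - (f₁ (g₂ x) + f₂ x) := by
    intro g₁ g₂ h₁ h₂ f₁ f₂ f₁₂ hs₁ hs₂ hs₁₂ hd₁ hd₂ hd₁₂ x y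
    have hsg : F.SmoothFun (f₁ ∘ ⇑g₂) := F.smoothFun_comp hs₁ h₂.1
    have hs' : F.SmoothFun (f₁ ∘ ⇑g₂ + f₂) := by
      apply F.smoothFun_of_ofFun
      rw [ofFun_add]
      exact F.smoothForm_add (F.smoothForm_ofFun hsg) (F.smoothForm_ofFun hs₂)
    have hd' : F.d (ofFun (f₁ ∘ ⇑g₂ + f₂)) = F.pull (g₁ * g₂) ω₁ - ω₁ := by
      rw [ofFun_add, F.d_add]
      have h1 : (ofFun (f₁ ∘ ⇑g₂) : Form M V 0) = F.pull (⇑g₂) (ofFun f₁) := by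
        rw [pull_ofFun]
      have h2 : F.d (F.pull (⇑g₂) (ofFun f₁)) = F.pull (⇑g₂) (F.d (ofFun f₁)) :=
        F.d_pull (ofFun f₁) h₂.1 (F.smoothForm_ofFun hs₁)
      rw [h1, h2, hd₁, hd₂, pull_sub]
      have h3 : F.pull (⇑g₂) (F.pull (⇑g₁) ω₁) = F.pull (⇑(g₁ * g₂)) ω₁ := by
        rw [← pull_comp F h₁.1 h₂.1]
        rfl
      rw [h3]; abel
    have := primitive_increment_eq F hs₁₂ hs' (by rw [hd₁₂, hd']) x y
    simpa using this
  constructor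
  · intro g₁ hg₁ g₂ hg₂ g₃ hg₃
    simp only [Set.mem_setOf_eq] at hg₁ hg₂ hg₃
    obtain ⟨f₁, hsf₁, hdf₁, hC₁₂⟩ := hC g₁ hg₁ g₂ hg₂
    obtain ⟨f₂, hsf₂, hdf₂, hC₂₃⟩ := hC g₂ hg₂ g₃ hg₃
    obtain ⟨f₁₂, hsf₁₂, hdf₁₂, hC₁₂₃⟩ := hC (g₁ * g₂) (hmul g₁ g₂ hg₁ hg₂) g₃ hg₃
    obtain ⟨f₁', hsf₁', hdf₁', hC₁₂₃'⟩ := hC g₁ hg₁ (g₂ * g₃) (hmul g₂ g₃ hg₂ hg₃)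
    -- C g₁ (g₂g₃) expressed via f₁
    have e1 : f₁' ((g₂ * g₃) x₀) - f₁' x₀ = f₁ ((g₂ * g₃) x₀) - f₁ x₀ :=
      primitive_increment_eq F hsf₁' hsf₁ (by rw [hdf₁', hdf₁]) x₀ ((g₂ * g₃) x₀)
    have e2 := key g₁ g₂ hg₁ hg₂ f₁ f₂ f₁₂ hsf₁ hsf₂ hsf₁₂ hdf₁ hdf₂ hdf₁₂ x₀ (g₃ x₀)
    have e3 : ((g₂ * g₃) x₀ : M) = g₂ (g₃ x₀) := rfl
    rw [hC₁₂, hC₂₃, hC₁₂₃, hC₁₂₃', e3]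
    rw [e3] at e1
    linarith [e1, e2]
  · intro g hg
    simp only [Set.mem_setOf_eq] at hg
    obtain ⟨f, hsf, hdf, hC1g⟩ := hC 1 hone g hg
    obtain ⟨f', hsf', hdf', hCg1⟩ := hC g hg 1 hone
    constructor
    · -- pull 1 ω₁ = ω₁, so f is constant
      have hpull : F.pull (⇑(1 : Equiv.Perm M)) ω₁ = ω₁ := by
        funext x; ext v
        simp [DiffCalc.pull, F.Tmap_id]
      have hd0 : F.d (ofFun f) = 0 := by rw [hdf, hpull, sub_self]
      have := F.apply_eq_of_d_ofFun_eq_zero hsf hd0 (g x₀) x₀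
      rw [hC1g, this, sub_self]
    · have : ((1 : Equiv.Perm M) x₀ : M) = x₀ := rfl
      rw [hCg1, this, sub_self]

end SymplCocycle
end

section
/- Let p:G̃→G be the universal covering homomorphism of a connected simple Lie group G, let a be a 2-cocycle on G with values in the trivial module ℝ, and suppose the pulled-back cocycle ã(g,h)=a(p(g),p(h)) on G̃ equals Db for a smooth function b:G̃→ℝ. If a=Df for some function f:G→ℝ, then b−f∘p:G̃→ℝ is a group homomorphism, hence (since G̃ is simple and connected and b−f∘p vanishes near the identity) b−f∘p=0, so f is smooth and a is trivial in the complex of smooth cochains. -/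
namespace SymplCocycle

section Coboundary

variable {M N A : Type*} [Monoid M] [Monoid N] [AddCommGroup A]

def coboundary (f : M → A) (g h : M) : A := f h - f (g * h) + f g

variable {p : M →* N} {b : M → A} {f : N → A}

theorem map_mul_sub_comp_of_coboundary_eq
    (hbf : ∀ x y, coboundary b x y = coboundary f (p x) (p y)) (x y : M) :
    b (x * y) - f (p (x * y)) = (b x - f (p x)) + (b y - f (p y)) := by
  have hxy := hbf x y
  simp only [coboundary, map_mul] at hxy ⊢
  linear_combination (norm := abel) -hxy

theorem eq_comp_of_coboundary_eq
    (hvanish : ∀ χ : M → A, (∀ x y, χ (x * y) = χ x + χ y) → ∀ x, χ x = 0)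
    (hbf : ∀ x y, coboundary b x y = coboundary f (p x) (p y)) (x : M) :
    b x = f (p x) :=
  sub_eq_zero.mp (hvanish (fun x => b x - f (p x)) (map_mul_sub_comp_of_coboundary_eq hbf) x)

end Coboundary

theorem smooth_trivial_of_trivial_of_cover_general
    {G' G : Type*} [Group G'] [Group G]  -- `G'` is the universal cover `G̃`
    (p : G' →* G)
    (SG : (G → ℝ) → Prop) (SG' : (G' → ℝ) → Prop)
    (hdescent : ∀ f : G → ℝ, SG' (f ∘ p) → SG f)
    (hvanish : ∀ h : G' → ℝ, (∀ x y : G', h (x * y) = h x + h y) → ∀ x, h x = 0)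
    (a : G → G → ℝ)
    (b : G' → ℝ) (hb : SG' b)
    (hab : ∀ g h : G', a (p g) (p h) = b h - b (g * h) + b g)
    (f : G → ℝ)
    (haf : ∀ g h : G, a g h = f h - f (g * h) + f g) :
    (∀ x y : G', (b (x * y) - f (p (x * y))) = (b x - f (p x)) + (b y - f (p y))) ∧
      (∀ x : G', b x = f (p x)) ∧
      SG f ∧
      (∃ f' : G → ℝ, SG f' ∧ ∀ g h : G, a g h = f' h - f' (g * h) + f' g) := by
  have hbf : ∀ x y, coboundary b x y = coboundary f (p x) (p y) :=
    fun x y => (hab x y).symm.trans (haf _ _)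
  have hpull := eq_comp_of_coboundary_eq hvanish hbf
  have hf : SG f := hdescent f (by rwa [show f ∘ p = b from funext fun x => (hpull x).symm])
  exact ⟨map_mul_sub_comp_of_coboundary_eq hbf, hpull, hf, f, hf, haf⟩

/-- Let `p : G̃ → G` be the universal covering homomorphism of a connected
simple Lie group `G` (so `p` is a surjective group homomorphism; smooth real functions on
`G` and on `G̃` are singled out by the predicates `SG` and `SG̃`, and a function on `G` is
smooth as soon as its pullback along the covering `p` is smooth).  Let `a` be a `2`-cocycle
on `G` with values in the trivial module `ℝ`, and suppose the pulled-back cocycle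
`ã(g,h) = a(p g, p h)` on `G̃` equals `Db` for a smooth function `b : G̃ → ℝ`.  Since `G̃` is
simple and connected, every group homomorphism `G̃ → ℝ` (which necessarily vanishes near the
identity) vanishes identically (hypothesis `hvanish`).

If `a = Df` for some (arbitrary) function `f : G → ℝ`, then `b − f ∘ p` is a group
homomorphism `G̃ → ℝ`, hence `b − f ∘ p = 0`; consequently `f` is smooth and `a` is trivial
already in the complex of smooth cochains. -/
theorem smooth_trivial_of_trivial_of_cover
    {G' G : Type*} [Group G'] [Group G]  -- `G'` is the universal cover `G̃`
    (p : G' →* G) (hp : Function.Surjective p)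
    (SG : (G → ℝ) → Prop) (SG' : (G' → ℝ) → Prop)
    (hdescent : ∀ f : G → ℝ, SG' (f ∘ p) → SG f)
    (hvanish : ∀ h : G' → ℝ, (∀ x y : G', h (x * y) = h x + h y) → ∀ x, h x = 0)
    (a : G → G → ℝ)
    (hcocycle : ∀ g₁ g₂ g₃ : G, a g₂ g₃ - a (g₁ * g₂) g₃ + a g₁ (g₂ * g₃) - a g₁ g₂ = 0)
    (b : G' → ℝ) (hb : SG' b)
    (hab : ∀ g h : G', a (p g) (p h) = b h - b (g * h) + b g)
    (f : G → ℝ)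
    (haf : ∀ g h : G, a g h = f h - f (g * h) + f g) :
    (∀ x y : G', (b (x * y) - f (p (x * y))) = (b x - f (p x)) + (b y - f (p y))) ∧
      (∀ x : G', b x = f (p x)) ∧
      SG f ∧
      (∃ f' : G → ℝ, SG f' ∧ ∀ g h : G, a g h = f' h - f' (g * h) + f' g) :=
  smooth_trivial_of_trivial_of_cover_general p SG SG' hdescent hvanish a b hb hab f haf

end SymplCocycle
end
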